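/- Multiple robustness: In the decomposition E[V] = E[ Σ_{r≠1} (1(R=1)·Odds*_r(L_{(r)}) − 1(R=r))·(U(L) − m_r(L_{(r)})) ] + E[U(L)], for each fixed r ≠ 1, the r-th summand E[(1(R=1)·Odds*_r(L_{(r)}) − 1(R=r))·(U(L) − m_r(L_{(r)}))] equals zero if EITHER (a) Odds*_r(L_{(r)}) = P(R=r|L)/P(R=1|L) (pattern-r odds model correct), OR (b) m_r(L_{(r)}) = E[U(L)|R=1, L_{(r)}] and the CCMV restriction E[U(L)|R=r,L_{(r)}] = E[U(L)|R=1,L_{(r)}] holds (pattern-r outcome model correct). Consequently the augmented estimating function is unbiased for E[U(L)] if for every pattern r at least one of the two pattern-specific models is correct. -/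
import Mathlib


open Finset MeasureTheory

open Classical in
noncomputable def pr {Ω : Type*} [Fintype Ω] (P : Ω → ℝ) (E : Ω → Prop) : ℝ :=
  ∑ ω, if E ω then P ω else 0

noncomputable def cpr {Ω : Type*} [Fintype Ω] (P : Ω → ℝ) (E F : Ω → Prop) : ℝ :=
  pr P (fun ω => E ω ∧ F ω) / pr P F

noncomputable def ex {Ω : Type*} [Fintype Ω] (P : Ω → ℝ) (U : Ω → ℝ) : ℝ :=
  ∑ ω, P ω * U ω

open Classical in
noncomputable def cex {Ω : Type*} [Fintype Ω] (P : Ω → ℝ) (U : Ω → ℝ) (F : Ω → Prop) : ℝ :=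
  (∑ ω, if F ω then P ω * U ω else 0) / pr P F

section helpers
open Classical
variable {Ω : Type*} [Fintype Ω] {P : Ω → ℝ} {E F : Ω → Prop}

lemma pr_nonneg (hP : ∀ ω, 0 ≤ P ω) : 0 ≤ pr P E := by
  unfold pr
  exact Finset.sum_nonneg fun ω _ => by split_ifs <;> [exact hP ω; exact le_rfl]

lemma pr_mono (hP : ∀ ω, 0 ≤ P ω) (hEF : ∀ ω, E ω → F ω) : pr P E ≤ pr P F := by
  unfold pr
  refine Finset.sum_le_sum fun ω _ => ?_
  by_cases hE : E ω
  · simp [hE, hEF ω hE]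
  · simp only [if_neg hE]; split_ifs <;> [exact hP ω; exact le_rfl]

lemma pr_eq_zero' (hP : ∀ ω, 0 ≤ P ω) (h : ¬ 0 < pr P E) : pr P E = 0 :=
  le_antisymm (not_lt.mp h) (pr_nonneg hP)

end helpers

open Classical in
lemma caseA {Ω A ρ : Type*} [Fintype Ω] (P : Ω → ℝ) (hP : ∀ ω, 0 ≤ P ω)
    (R : Ω → ρ) (L : Ω → A) (r0 r : ρ) (hr : r ≠ r0) (Odds : A → ℝ)
    (hpos : ∀ l, 0 < pr P (fun ω => L ω = l) → 0 < pr P (fun ω => R ω = r0 ∧ L ω = l))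
    (hodds : ∀ l, 0 < pr P (fun ω => L ω = l) →
      Odds l = cpr P (fun ω => R ω = r) (fun ω => L ω = l) /
        cpr P (fun ω => R ω = r0) (fun ω => L ω = l))
    (g : A → ℝ) :
    ∑ ω, P ω * (((if R ω = r0 then Odds (L ω) else 0) -
      if R ω = r then 1 else 0) * g (L ω)) = 0 := by
  classical
  rw [← Finset.sum_fiberwise_of_maps_to
    (fun ω _ => Finset.mem_image_of_mem L (Finset.mem_univ ω))
    (fun ω => P ω * (((if R ω = r0 then Odds (L ω) else 0) -
      if R ω = r then 1 else 0) * g (L ω)))]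
  refine Finset.sum_eq_zero fun l _ => ?_
  have key : Odds l * pr P (fun ω => R ω = r0 ∧ L ω = l) =
      pr P (fun ω => R ω = r ∧ L ω = l) := by
    by_cases hl0 : 0 < pr P (fun ω => L ω = l)
    · have h0 := hpos l hl0
      have hodds' := hodds l hl0
      unfold cpr at hodds'
      have hlne : pr P (fun ω => L ω = l) ≠ 0 := ne_of_gt hl0
      have h0ne : pr P (fun ω => R ω = r0 ∧ L ω = l) ≠ 0 := ne_of_gt h0
      rw [hodds']
      field_simp
    · have hl : pr P (fun ω => L ω = l) = 0 := pr_eq_zero' hP hl0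
      have e0 : pr P (fun ω => R ω = r0 ∧ L ω = l) = 0 :=
        le_antisymm (hl ▸ pr_mono hP fun ω h => h.2) (pr_nonneg hP)
      have er : pr P (fun ω => R ω = r ∧ L ω = l) = 0 :=
        le_antisymm (hl ▸ pr_mono hP fun ω h => h.2) (pr_nonneg hP)
      rw [e0, er]; ring
  calc ∑ ω ∈ Finset.univ.filter (fun ω => L ω = l),
        P ω * (((if R ω = r0 then Odds (L ω) else 0) -
          if R ω = r then 1 else 0) * g (L ω))
      = ∑ ω, ((Odds l * (if R ω = r0 ∧ L ω = l then P ω else 0)) * g l -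
          (if R ω = r ∧ L ω = l then P ω else 0) * g l) := by
        rw [Finset.sum_filter]
        refine Finset.sum_congr rfl fun ω _ => ?_
        by_cases hL : L ω = l
        · by_cases h0 : R ω = r0
          · have hnr : ¬ R ω = r := fun hh => hr (hh ▸ h0 : r = r0)
            simp [hL, h0, hnr, Ne.symm hr]; ring
          · by_cases hR : R ω = r
            · simp [hL, h0, hR, hr]
            · simp [hL, h0, hR]
        · simp [hL]
    _ = (Odds l * pr P (fun ω => R ω = r0 ∧ L ω = l)) * g l -
        pr P (fun ω => R ω = r ∧ L ω = l) * g l := by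
        unfold pr
        rw [Finset.sum_sub_distrib, ← Finset.sum_mul, ← Finset.sum_mul, ← Finset.mul_sum]
        congr <;> funext ω <;> simp
    _ = 0 := by rw [key]; ring

open Classical in
lemma pr_zero_app {Ω : Type*} [Fintype Ω] {P : Ω → ℝ} {E : Ω → Prop}
    (hP : ∀ ω, 0 ≤ P ω) (h : pr P E = 0) {ω : Ω} (hE : E ω) : P ω = 0 := by
  unfold pr at h
  have := (Finset.sum_eq_zero_iff_of_nonneg (fun ω _ => by
    split_ifs <;> [exact hP ω; exact le_rfl])).mp h ω (Finset.mem_univ ω)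
  simpa [hE] using this

open Classical in
lemma cex_mul {Ω : Type*} [Fintype Ω] {P : Ω → ℝ} {F : Ω → Prop}
    (hF : pr P F ≠ 0) (U : Ω → ℝ) :
    cex P U F * pr P F = ∑ ω, if F ω then P ω * U ω else 0 := by
  unfold cex; field_simp

open Classical in
lemma caseB {Ω A β ρ : Type*} [Fintype Ω] (P : Ω → ℝ) (hP : ∀ ω, 0 ≤ P ω)
    (R : Ω → ρ) (L : Ω → A) (Q : A → β) (r0 r : ρ) (hr : r ≠ r0)
    (Odds : β → ℝ) (U : A → ℝ) (mf : β → ℝ)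
    (hm : ∀ b, 0 < pr P (fun ω => Q (L ω) = b) →
      mf b = cex P (fun ω => U (L ω)) (fun ω => R ω = r0 ∧ Q (L ω) = b))
    (hccmv : ∀ b, 0 < pr P (fun ω => R ω = r ∧ Q (L ω) = b) →
      cex P (fun ω => U (L ω)) (fun ω => R ω = r ∧ Q (L ω) = b) =
        cex P (fun ω => U (L ω)) (fun ω => R ω = r0 ∧ Q (L ω) = b)) :
    ∑ ω, P ω * (((if R ω = r0 then Odds (Q (L ω)) else 0) -
      if R ω = r then 1 else 0) * (U (L ω) - mf (Q (L ω)))) = 0 := by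
  classical
  rw [← Finset.sum_fiberwise_of_maps_to
    (fun ω _ => Finset.mem_image_of_mem (fun ω => Q (L ω)) (Finset.mem_univ ω))
    (fun ω => P ω * (((if R ω = r0 then Odds (Q (L ω)) else 0) -
      if R ω = r then 1 else 0) * (U (L ω) - mf (Q (L ω)))))]
  refine Finset.sum_eq_zero fun b _ => ?_
  -- the two conditional sums vanish
  have hS0 : ∑ ω, (if R ω = r0 ∧ Q (L ω) = b then P ω * (U (L ω) - mf b) else 0) = 0 := by
    by_cases h0 : 0 < pr P (fun ω => R ω = r0 ∧ Q (L ω) = b)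
    · have hb : 0 < pr P (fun ω => Q (L ω) = b) :=
        lt_of_lt_of_le h0 (pr_mono hP fun ω h => h.2)
      have hnum := cex_mul (P := P) (F := fun ω => R ω = r0 ∧ Q (L ω) = b)
        (ne_of_gt h0) (fun ω => U (L ω))
      have hsplit : ∑ ω, (if R ω = r0 ∧ Q (L ω) = b then P ω * (U (L ω) - mf b) else 0) =
          (∑ ω, if R ω = r0 ∧ Q (L ω) = b then P ω * U (L ω) else 0) -
            mf b * pr P (fun ω => R ω = r0 ∧ Q (L ω) = b) := by
        unfold pr
        rw [Finset.mul_sum, ← Finset.sum_sub_distrib]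
        refine Finset.sum_congr rfl fun ω _ => ?_
        split_ifs <;> ring
      rw [hsplit, hm b hb, hnum]
      ring
    · have h0' : pr P (fun ω => R ω = r0 ∧ Q (L ω) = b) = 0 := pr_eq_zero' hP h0
      refine Finset.sum_eq_zero fun ω _ => ?_
      split_ifs with hc
      · rw [pr_zero_app hP h0' hc]; ring
      · rfl
  have hSr : ∑ ω, (if R ω = r ∧ Q (L ω) = b then P ω * (U (L ω) - mf b) else 0) = 0 := by
    by_cases h0 : 0 < pr P (fun ω => R ω = r ∧ Q (L ω) = b)
    · have hb : 0 < pr P (fun ω => Q (L ω) = b) :=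
        lt_of_lt_of_le h0 (pr_mono hP fun ω h => h.2)
      have hnum := cex_mul (P := P) (F := fun ω => R ω = r ∧ Q (L ω) = b)
        (ne_of_gt h0) (fun ω => U (L ω))
      have hmb : mf b = cex P (fun ω => U (L ω)) (fun ω => R ω = r ∧ Q (L ω) = b) := by
        rw [hm b hb, ← hccmv b h0]
      have hsplit : ∑ ω, (if R ω = r ∧ Q (L ω) = b then P ω * (U (L ω) - mf b) else 0) =
          (∑ ω, if R ω = r ∧ Q (L ω) = b then P ω * U (L ω) else 0) -
            mf b * pr P (fun ω => R ω = r ∧ Q (L ω) = b) := by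
        unfold pr
        rw [Finset.mul_sum, ← Finset.sum_sub_distrib]
        refine Finset.sum_congr rfl fun ω _ => ?_
        split_ifs <;> ring
      rw [hsplit, hmb, hnum]
      ring
    · have h0' : pr P (fun ω => R ω = r ∧ Q (L ω) = b) = 0 := pr_eq_zero' hP h0
      refine Finset.sum_eq_zero fun ω _ => ?_
      split_ifs with hc
      · rw [pr_zero_app hP h0' hc]; ring
      · rfl
  calc ∑ ω ∈ Finset.univ.filter (fun ω => Q (L ω) = b),
        P ω * (((if R ω = r0 then Odds (Q (L ω)) else 0) -
          if R ω = r then 1 else 0) * (U (L ω) - mf (Q (L ω))))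
      = ∑ ω, (Odds b * (if R ω = r0 ∧ Q (L ω) = b then P ω * (U (L ω) - mf b) else 0) -
          (if R ω = r ∧ Q (L ω) = b then P ω * (U (L ω) - mf b) else 0)) := by
        rw [Finset.sum_filter]
        refine Finset.sum_congr rfl fun ω _ => ?_
        by_cases hQ : Q (L ω) = b
        · by_cases h0 : R ω = r0
          · have hnr : ¬ R ω = r := fun hh => hr (hh ▸ h0 : r = r0)
            simp [hQ, h0, hnr, Ne.symm hr]; ring
          · by_cases hR : R ω = r
            · simp [hQ, h0, hR, hr]; ring
            · simp [hQ, h0, hR]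
        · simp [hQ]
    _ = 0 := by
        rw [Finset.sum_sub_distrib, ← Finset.mul_sum, hS0, hSr]
        ring

/-- Multiple robustness: in the decomposition of the augmented estimating
function, for each pattern `r ≠ 1` the `r`-th summand
`E[(1(R=1)·Odds*_r(L_(r)) − 1(R=r))·(U(L) − m_r(L_(r)))]` vanishes whenever EITHER the
pattern-`r` odds model is correct OR the pattern-`r` outcome model is correct (CCMV for
pattern `r` with `m_r` the complete-case conditional mean). Consequently, if for every
pattern at least one of the two models is correct, the augmented estimating function is
unbiased for `E[U(L)]`. Pattern `0` is the complete-case pattern. -/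
theorem stmt11 {Ω A : Type*} [Fintype Ω] {J : ℕ} {B : Fin (J + 1) → Type*}
    (P : Ω → ℝ) (hP : ∀ ω, 0 ≤ P ω) (hPsum : ∑ ω, P ω = 1)
    (R : Ω → Fin (J + 1)) (L : Ω → A)
    (O : (r : Fin (J + 1)) → A → B r) (U : A → ℝ)
    (hpos : ∀ l : A, 0 < pr P (fun ω => L ω = l) →
      0 < pr P (fun ω => R ω = 0 ∧ L ω = l))
    (OddsStar : (r : Fin (J + 1)) → B r → ℝ) (hOdds : ∀ r b, 0 < OddsStar r b)
    (m : (r : Fin (J + 1)) → B r → ℝ)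
    (h : ∀ r, r ≠ 0 →
      ((∀ l : A, 0 < pr P (fun ω => L ω = l) →
          OddsStar r (O r l) =
            cpr P (fun ω => R ω = r) (fun ω => L ω = l) /
              cpr P (fun ω => R ω = 0) (fun ω => L ω = l)) ∨
        ((∀ b : B r, 0 < pr P (fun ω => O r (L ω) = b) →
            m r b = cex P (fun ω => U (L ω)) (fun ω => R ω = 0 ∧ O r (L ω) = b)) ∧
          ∀ b : B r, 0 < pr P (fun ω => R ω = r ∧ O r (L ω) = b) →
            cex P (fun ω => U (L ω)) (fun ω => R ω = r ∧ O r (L ω) = b) =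
              cex P (fun ω => U (L ω)) (fun ω => R ω = 0 ∧ O r (L ω) = b)))) :
    (∀ r, r ≠ 0 →
      ex P (fun ω =>
          ((if R ω = 0 then OddsStar r (O r (L ω)) else 0) -
            (if R ω = r then 1 else 0)) * (U (L ω) - m r (O r (L ω)))) = 0) ∧
    ex P (fun ω =>
        (if R ω = 0 then
          (1 + ∑ s ∈ Finset.univ.erase (0 : Fin (J + 1)), OddsStar s (O s (L ω))) * U (L ω) -
            ∑ r ∈ Finset.univ.erase (0 : Fin (J + 1)),
              OddsStar r (O r (L ω)) * m r (O r (L ω))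
        else 0) +
        ∑ r ∈ Finset.univ.erase (0 : Fin (J + 1)),
          (if R ω = r then m r (O r (L ω)) else 0)) =
      ex P (fun ω => U (L ω)) := by
  classical
  have part1 : ∀ r, r ≠ 0 →
      ex P (fun ω =>
          ((if R ω = 0 then OddsStar r (O r (L ω)) else 0) -
            (if R ω = r then 1 else 0)) * (U (L ω) - m r (O r (L ω)))) = 0 := by
    intro r hr
    unfold ex
    beta_reduce
    rcases h r hr with hA | ⟨hm, hccmv⟩
    · convert caseA P hP R L 0 r hr (fun l => OddsStar r (O r l)) hpos hA
        (fun l => U l - m r (O r l)) using 1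
      exact Finset.sum_congr rfl fun ω _ => by congr
    · convert caseB P hP R L (O r) 0 r hr (OddsStar r) U (m r) hm hccmv using 1
      exact Finset.sum_congr rfl fun ω _ => by congr
  refine ⟨part1, ?_⟩
  have hdecomp : ∀ ω,
      ((if R ω = 0 then
          (1 + ∑ s ∈ Finset.univ.erase (0 : Fin (J + 1)), OddsStar s (O s (L ω))) * U (L ω) -
            ∑ r ∈ Finset.univ.erase (0 : Fin (J + 1)),
              OddsStar r (O r (L ω)) * m r (O r (L ω))
        else 0) +
        ∑ r ∈ Finset.univ.erase (0 : Fin (J + 1)),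
          (if R ω = r then m r (O r (L ω)) else 0)) =
      U (L ω) + ∑ r ∈ Finset.univ.erase (0 : Fin (J + 1)),
        ((if R ω = 0 then OddsStar r (O r (L ω)) else 0) -
          (if R ω = r then 1 else 0)) * (U (L ω) - m r (O r (L ω))) := by
    intro ω
    by_cases h0 : R ω = 0
    · have hnr : ∀ r ∈ Finset.univ.erase (0 : Fin (J + 1)), ¬ (R ω = r) := by
        intro r hrr hc
        exact (Finset.mem_erase.mp hrr).1 (hc ▸ h0 : r = 0)
      have e1 : ∑ r ∈ Finset.univ.erase (0 : Fin (J + 1)),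
          (if R ω = r then m r (O r (L ω)) else 0) = 0 :=
        Finset.sum_eq_zero fun r hrr => if_neg (hnr r hrr)
      have e2 : ∑ r ∈ Finset.univ.erase (0 : Fin (J + 1)),
          ((if R ω = 0 then OddsStar r (O r (L ω)) else 0) -
            (if R ω = r then 1 else 0)) * (U (L ω) - m r (O r (L ω))) =
          ∑ r ∈ Finset.univ.erase (0 : Fin (J + 1)),
            OddsStar r (O r (L ω)) * (U (L ω) - m r (O r (L ω))) :=
        Finset.sum_congr rfl fun r hrr => by
          rw [if_pos h0, if_neg (hnr r hrr)]; ring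
      rw [if_pos h0, e1, e2]
      simp only [mul_sub, Finset.sum_sub_distrib, add_mul, one_mul, Finset.sum_mul]
      ring
    · rw [if_neg h0]
      have hmem : R ω ∈ Finset.univ.erase (0 : Fin (J + 1)) :=
        Finset.mem_erase.mpr ⟨h0, Finset.mem_univ _⟩
      have e1 : ∑ r ∈ Finset.univ.erase (0 : Fin (J + 1)),
          (if R ω = r then m r (O r (L ω)) else 0) = m (R ω) (O (R ω) (L ω)) := by
        rw [Finset.sum_ite_eq, if_pos hmem]
      have e2 : ∑ r ∈ Finset.univ.erase (0 : Fin (J + 1)),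
          ((if R ω = 0 then OddsStar r (O r (L ω)) else 0) -
            (if R ω = r then 1 else 0)) * (U (L ω) - m r (O r (L ω))) =
          ∑ r ∈ Finset.univ.erase (0 : Fin (J + 1)),
            (if R ω = r then -(U (L ω) - m r (O r (L ω))) else 0) := by
        refine Finset.sum_congr rfl fun r hrr => ?_
        rw [if_neg h0]
        split_ifs <;> ring
      rw [e1, e2, Finset.sum_ite_eq, if_pos hmem]
      ring
  unfold ex
  calc ∑ ω, P ω * ((if R ω = 0 then
          (1 + ∑ s ∈ Finset.univ.erase (0 : Fin (J + 1)), OddsStar s (O s (L ω))) * U (L ω) -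
            ∑ r ∈ Finset.univ.erase (0 : Fin (J + 1)),
              OddsStar r (O r (L ω)) * m r (O r (L ω))
        else 0) +
        ∑ r ∈ Finset.univ.erase (0 : Fin (J + 1)),
          (if R ω = r then m r (O r (L ω)) else 0))
      = ∑ ω, (P ω * U (L ω) + ∑ r ∈ Finset.univ.erase (0 : Fin (J + 1)),
          P ω * (((if R ω = 0 then OddsStar r (O r (L ω)) else 0) -
            (if R ω = r then 1 else 0)) * (U (L ω) - m r (O r (L ω))))) := by
        refine Finset.sum_congr rfl fun ω _ => ?_
        rw [hdecomp ω, mul_add, Finset.mul_sum]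
    _ = ∑ ω, P ω * U (L ω) + ∑ r ∈ Finset.univ.erase (0 : Fin (J + 1)),
          ∑ ω, P ω * (((if R ω = 0 then OddsStar r (O r (L ω)) else 0) -
            (if R ω = r then 1 else 0)) * (U (L ω) - m r (O r (L ω)))) := by
        rw [Finset.sum_add_distrib, Finset.sum_comm]
    _ = ∑ ω, P ω * U (L ω) := by
        have hz : ∑ r ∈ Finset.univ.erase (0 : Fin (J + 1)),
            ∑ ω, P ω * (((if R ω = 0 then OddsStar r (O r (L ω)) else 0) -
              (if R ω = r then 1 else 0)) * (U (L ω) - m r (O r (L ω)))) = 0 := by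
          refine Finset.sum_eq_zero fun r hrr => ?_
          have := part1 r (Finset.mem_erase.mp hrr).1
          unfold ex at this
          beta_reduce at this
          exact this
        rw [hz, add_zero]
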